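/- Consider the copositive program min_{W ∈ Δ^p} Tr(C W) subject to 𝒜W = v. Let β₀ > 0, and for t = 1, 2, … set β_t = β₀√(t+1) and η_t = 2/(t+1). Let W₁ ∈ Δ^p and y₁ ∈ ℝ^d, and for each t ≥ 1 define: G_t = C + 𝒜ᵀy_t + β_t 𝒜ᵀ(𝒜W_t − v); H_t ∈ Δ^p any minimizer of W ↦ Tr(G_t W) over Δ^p; W_{t+1} = (1 − η_t) W_t + η_t H_t; g_t = 𝒜W_{t+1} − v; and y_{t+1} = y_t + γ_t g_t where γ_t ≥ 0 satisfies γ_t‖g_t‖² ≤ β_t η_t² p² ‖𝒜‖². Assume there exists W⋆ ∈ Δ^p with 𝒜W⋆ = v minimizing Tr(C W) over {W ∈ Δ^p : 𝒜W = v}, that strong duality holds in the sense that there exists y⋆ ∈ ℝ^d with Tr(C W⋆) ≤ Tr(C W) + y⋆ᵀ(𝒜W − v) for all W ∈ Δ^p, and that there is D < ∞ with ‖y_t‖ ≤ D for all t and ‖y⋆‖ ≤ D. Then for every t ≥ 2, ‖𝒜W_t − v‖ ≤ (1/√t)(2√3 p ‖𝒜‖ + 4D/β₀). -/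

import Mathlib

/-!
Write `L_β(X, z) = Tr(C X) + ⟪z, 𝒜X - v⟫ + β/2 ‖𝒜X - v‖²` for the augmented Lagrangian and
`E_t = L_{β₀√t}(W_t, y_t) - Tr(C W⋆)`. Testing the Frank–Wolfe linearization against the feasible
`W⋆`, bounding `‖𝒜(H_t - W_t)‖ ≤ p ‖𝒜‖` on `Δ^p`, and paying at most `β_t η_t² p² ‖𝒜‖²` for the
dual step gives `E_{t+1} ≤ (1 - η_t) E_t + 6 β₀ p² ‖𝒜‖² / ((t+1)√(t+1))`; the increase of the
penalty parameter from `β₀√t` to `β₀√(t+1)` is paid for by the `-η_t β_t/2 ‖𝒜W_t - v‖²` gained in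
the Frank–Wolfe step. Hence `E_t ≤ 6 β₀ p² ‖𝒜‖² / √t`. On the other hand strong duality and the
bound `D` on the dual variables give `E_t ≥ β₀√t/2 r² - 2 D r` for `r = ‖𝒜W_t - v‖`, and solving
this quadratic inequality in `r` gives the bound.
-/

open scoped BigOperators

noncomputable section

/-- A binary (0/1-valued) vector. -/
def binaryVec {ι : Type*} (x : ι → ℝ) : Prop := ∀ i, x i = 0 ∨ x i = 1

/-- `Δ^p`: the convex hull of the rank-one binary matrices `x xᵀ`, `x ∈ {0,1}^p`. -/
def CPdelta (ι : Type*) [Fintype ι] : Set (Matrix ι ι ℝ) :=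
  convexHull ℝ {M | ∃ x : ι → ℝ, binaryVec x ∧ M = Matrix.vecMulVec x x}

/-- Frobenius inner product of matrices. -/
def frobInner {ι : Type*} [Fintype ι] (A B : Matrix ι ι ℝ) : ℝ := ∑ i, ∑ j, A i j * B i j

/-- Frobenius norm of a matrix. -/
def frobNorm {ι : Type*} [Fintype ι] (A : Matrix ι ι ℝ) : ℝ :=
  Real.sqrt (∑ i, ∑ j, (A i j) ^ 2)

/-- Operator norm `‖𝒜‖ = sup {‖𝒜X‖ : ‖X‖_F ≤ 1}` of a linear map from matrices
(with the Frobenius norm) to `ℝ^d` (with the Euclidean norm). -/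
def opNorm {p d : ℕ} (A : Matrix (Fin p) (Fin p) ℝ →ₗ[ℝ] EuclideanSpace ℝ (Fin d)) : ℝ :=
  sSup {r : ℝ | ∃ X : Matrix (Fin p) (Fin p) ℝ, frobNorm X ≤ 1 ∧ r = ‖A X‖}

open scoped RealInnerProductSpace

lemma le_div_add_sqrt_of_mul_sq_le {a b c r : ℝ} (ha : 0 < a) (hb : 0 ≤ b) (hc : 0 ≤ c)
    (h : a * r ^ 2 ≤ b * r + c) : r ≤ b / a + √(c / a) := by
  set s := √(c / a)
  have hs : 0 ≤ s := Real.sqrt_nonneg _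
  have hcs : c = a * s ^ 2 := by
    rw [Real.sq_sqrt (by positivity)]; field_simp
  have hba : b = a * (b / a) := by field_simp
  by_contra! hlt
  have hu : 0 ≤ b / a := by positivity
  rw [hcs, hba] at h
  nlinarith [mul_lt_mul_of_pos_left hlt ha]

lemma sqrt_recursion_step_le {n : ℝ} (hn : 2 ≤ n) :
    (1 - 2 / (n + 1)) / √n + 1 / ((n + 1) * √(n + 1)) ≤ 1 / √(n + 1) := by
  have hs : 0 < √n := Real.sqrt_pos.mpr (by linarith)
  have hs' : 0 < √(n + 1) := Real.sqrt_pos.mpr (by linarith)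
  -- the claim with denominators cleared
  have key : (n - 1) * √(n + 1) ≤ n * √n := by
    rw [← pow_le_pow_iff_left₀ (by nlinarith) (by positivity) two_ne_zero, mul_pow, mul_pow,
      Real.sq_sqrt (by linarith), Real.sq_sqrt (by linarith)]
    nlinarith
  rw [div_add_div _ _ hs.ne' (by positivity), div_le_div_iff₀ (by positivity) hs']
  have h1 : 1 - 2 / (n + 1) = (n - 1) / (n + 1) := by field_simp; ring
  rw [h1]
  field_simp
  nlinarith [Real.mul_self_sqrt (by linarith : (0:ℝ) ≤ n),
    Real.mul_self_sqrt (by linarith : (0:ℝ) ≤ n + 1)]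

lemma le_div_sqrt_of_recursion {e : ℕ → ℝ} {K : ℝ} (hK : 0 ≤ K)
    (h : ∀ n : ℕ, 1 ≤ n → e (n + 1) ≤ (1 - 2 / ((n : ℝ) + 1)) * e n
      + K / (((n : ℝ) + 1) * √((n : ℝ) + 1))) :
    ∀ n : ℕ, 2 ≤ n → e n ≤ K / √(n : ℝ) := by
  intro n hn
  induction n, hn using Nat.le_induction with
  | base =>
    have h1 := h 1 le_rfl
    norm_num at h1 ⊢
    calc e 2 ≤ K / (2 * √2) := h1
      _ ≤ K / √2 := div_le_div_of_nonneg_left hK (by positivity) (by linarith [Real.sqrt_nonneg 2])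
  | succ n hn ih =>
    have hn' : (2 : ℝ) ≤ n := by exact_mod_cast hn
    have hη : 0 ≤ 1 - 2 / ((n : ℝ) + 1) := by
      rw [sub_nonneg, div_le_one (by linarith)]; linarith
    calc e (n + 1)
        ≤ (1 - 2 / ((n : ℝ) + 1)) * (K / √(n : ℝ)) + K / (((n : ℝ) + 1) * √((n : ℝ) + 1)) := by
          linarith [h n (by omega), mul_le_mul_of_nonneg_left ih hη]
      _ = K * ((1 - 2 / ((n : ℝ) + 1)) / √(n : ℝ) + 1 / (((n : ℝ) + 1) * √((n : ℝ) + 1))) := by ring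
      _ ≤ K * (1 / √((n : ℝ) + 1)) := mul_le_mul_of_nonneg_left (sqrt_recursion_step_le hn') hK
      _ = K / √((n + 1 : ℕ) : ℝ) := by push_cast; ring

section AugmentedLagrangian

variable {E F : Type*} [AddCommGroup E] [Module ℝ E] [NormedAddCommGroup F]
  [InnerProductSpace ℝ F] (f : E →ₗ[ℝ] ℝ) (A : E →ₗ[ℝ] F) (v : F)

def augLagrangian (β : ℝ) (X : E) (z : F) : ℝ :=
  f X + ⟪z, A X - v⟫ + β / 2 * ‖A X - v‖ ^ 2

lemma augLagrangian_add_smul_residual (β γ : ℝ) (X : E) (z : F) :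
    augLagrangian f A v β X (z + γ • (A X - v)) =
      augLagrangian f A v β X z + γ * ‖A X - v‖ ^ 2 := by
  simp only [augLagrangian, inner_add_left, real_inner_smul_left, real_inner_self_eq_norm_sq]
  ring

lemma augLagrangian_eq_add_penalty (β β' : ℝ) (X : E) (z : F) :
    augLagrangian f A v β X z =
      augLagrangian f A v β' X z + (β - β') / 2 * ‖A X - v‖ ^ 2 := by
  simp only [augLagrangian]
  ring

variable {f A v}

lemma augLagrangian_frankWolfe_step_le {β η M : ℝ} {W H Wstar : E} {z : F}
    (hη : 0 ≤ η) (hβ : 0 ≤ β) (hfeas : A Wstar = v)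
    (hH : f H + ⟪z, A H⟫ + β * ⟪A W - v, A H⟫ ≤
      f Wstar + ⟪z, A Wstar⟫ + β * ⟪A W - v, A Wstar⟫)
    (hdiam : ‖A H - A W‖ ^ 2 ≤ M) :
    augLagrangian f A v β ((1 - η) • W + η • H) z - f Wstar ≤
      (1 - η) * (augLagrangian f A v β W z - f Wstar) - η * β / 2 * ‖A W - v‖ ^ 2
        + β * η ^ 2 / 2 * M := by
  set r := A W - v
  set d := A H - A W
  have hres : A ((1 - η) • W + η • H) - v = r + η • d := by
    simp only [r, d, map_add, map_smul]; module
  have hobj : f ((1 - η) • W + η • H) = f W + η * (f H - f W) := by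
    simp only [map_add, map_smul, smul_eq_mul]; ring
  have hlin : f H - f W + ⟪z, d⟫ + β * ⟪r, d⟫ ≤ f Wstar - f W - ⟪z, r⟫ - β * ‖r‖ ^ 2 := by
    have hAH : A H = d + r + v := by simp only [r, d]; abel
    rw [hfeas, hAH] at hH
    simp only [inner_add_right, real_inner_self_eq_norm_sq] at hH
    linarith
  have hsq : ‖r + η • d‖ ^ 2 = ‖r‖ ^ 2 + 2 * η * ⟪r, d⟫ + η ^ 2 * ‖d‖ ^ 2 := by
    rw [norm_add_sq_real, real_inner_smul_right, norm_smul, mul_pow, Real.norm_eq_abs, sq_abs]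
    ring
  have h1 := mul_le_mul_of_nonneg_left hlin hη
  have h2 := mul_le_mul_of_nonneg_left hdiam (by positivity : 0 ≤ β * η ^ 2 / 2)
  simp only [augLagrangian, hres, hobj, hsq, inner_add_right, real_inner_smul_right]
  linarith

lemma augLagrangian_step_le {β β' η γ M : ℝ} {W H Wstar : E} {z : F}
    (hη : 0 ≤ η) (hβ : 0 ≤ β) (hfeas : A Wstar = v)
    (hH : f H + ⟪z, A H⟫ + β * ⟪A W - v, A H⟫ ≤
      f Wstar + ⟪z, A Wstar⟫ + β * ⟪A W - v, A Wstar⟫)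
    (hdiam : ‖A H - A W‖ ^ 2 ≤ M) (hpen : (1 - η) * (β - β') ≤ η * β)
    (hγ : γ * ‖A ((1 - η) • W + η • H) - v‖ ^ 2 ≤ β * η ^ 2 * M) :
    augLagrangian f A v β ((1 - η) • W + η • H)
        (z + γ • (A ((1 - η) • W + η • H) - v)) - f Wstar ≤
      (1 - η) * (augLagrangian f A v β' W z - f Wstar) + 3 / 2 * β * η ^ 2 * M := by
  have hprimal := augLagrangian_frankWolfe_step_le hη hβ hfeas hH hdiam
  have hpen' := mul_le_mul_of_nonneg_right hpen (sq_nonneg ‖A W - v‖)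
  rw [augLagrangian_add_smul_residual]
  rw [augLagrangian_eq_add_penalty f A v β β' W z] at hprimal
  linarith

lemma norm_residual_le_of_augLagrangian_sub_le {β D ε fstar : ℝ} {X : E} {z zstar : F}
    (hβ : 0 < β) (hε : 0 ≤ ε) (hdual : fstar ≤ f X + ⟪zstar, A X - v⟫)
    (hz : ‖z‖ ≤ D) (hzstar : ‖zstar‖ ≤ D) (hL : augLagrangian f A v β X z - fstar ≤ ε) :
    ‖A X - v‖ ≤ 4 * D / β + √(2 * ε / β) := by
  have hD : 0 ≤ D := (norm_nonneg _).trans hzstar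
  have hzr : -(D * ‖A X - v‖) ≤ ⟪z, A X - v⟫ := by
    have := neg_le_of_abs_le (abs_real_inner_le_norm z (A X - v))
    nlinarith [norm_nonneg (A X - v)]
  have hzstarr : ⟪zstar, A X - v⟫ ≤ D * ‖A X - v‖ :=
    (real_inner_le_norm _ _).trans (mul_le_mul_of_nonneg_right hzstar (norm_nonneg _))
  have hquad : β / 2 * ‖A X - v‖ ^ 2 ≤ 2 * D * ‖A X - v‖ + ε := by
    simp only [augLagrangian] at hL
    linarith
  rw [show 4 * D / β = 2 * D / (β / 2) by ring, show 2 * ε / β = ε / (β / 2) by ring]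
  exact le_div_add_sqrt_of_mul_sq_le (by positivity) (by positivity) hε hquad

end AugmentedLagrangian

lemma Convex.mem_of_iterate_convex_combination {E : Type*} [AddCommGroup E] [Module ℝ E]
    {s : Set E} (hs : Convex ℝ s) {W H : ℕ → E} {η : ℕ → ℝ} {m : ℕ}
    (hη : ∀ n, m ≤ n → η n ∈ Set.Icc 0 1) (hWm : W m ∈ s) (hH : ∀ n, m ≤ n → H n ∈ s)
    (hW : ∀ n, m ≤ n → W (n + 1) = (1 - η n) • W n + η n • H n) :
    ∀ n, m ≤ n → W n ∈ s := by
  intro n hn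
  induction n, hn using Nat.le_induction with
  | base => exact hWm
  | succ n hn ih =>
    rw [hW n hn]
    exact hs ih (hH n hn) (by linarith [(hη n hn).2]) (hη n hn).1 (by ring)

section CPdelta

variable {ι : Type*} [Fintype ι]

lemma isSymm_of_mem_CPdelta {X : Matrix ι ι ℝ} (hX : X ∈ CPdelta ι) : X.IsSymm := by
  refine convexHull_min (t := {M | M.IsSymm}) ?_ (fun Y hY Z hZ a b _ _ _ => ?_) hX
  · rintro _ ⟨x, -, rfl⟩
    exact Matrix.transpose_vecMulVec x x
  · exact (hY.smul a).add (hZ.smul b)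

lemma entry_mem_Icc_of_mem_CPdelta {X : Matrix ι ι ℝ} (hX : X ∈ CPdelta ι) (i j : ι) :
    X i j ∈ Set.Icc (0 : ℝ) 1 := by
  have hcube : Convex ℝ (Set.univ.pi fun _ : ι => Set.univ.pi fun _ : ι => Set.Icc (0 : ℝ) 1) :=
    convex_pi fun _ _ => convex_pi fun _ _ => convex_Icc 0 1
  refine convexHull_min ?_ hcube hX i trivial j trivial
  rintro _ ⟨x, hx, rfl⟩ i - j -
  rw [Matrix.vecMulVec_apply]
  rcases hx i with h | h <;> rcases hx j with h' | h' <;> simp [h, h']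

lemma frobNorm_sub_le_of_mem_CPdelta {X Y : Matrix ι ι ℝ} (hX : X ∈ CPdelta ι)
    (hY : Y ∈ CPdelta ι) : frobNorm (X - Y) ≤ Fintype.card ι := by
  have hentry : ∀ i j, (X - Y) i j ^ 2 ≤ 1 := fun i j => by
    obtain ⟨hX0, hX1⟩ := entry_mem_Icc_of_mem_CPdelta hX i j
    obtain ⟨hY0, hY1⟩ := entry_mem_Icc_of_mem_CPdelta hY i j
    rw [Matrix.sub_apply]
    nlinarith
  calc frobNorm (X - Y) ≤ √(∑ _i : ι, ∑ _j : ι, (1 : ℝ)) :=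
        Real.sqrt_le_sqrt (Finset.sum_le_sum fun i _ => Finset.sum_le_sum fun j _ => hentry i j)
    _ = Fintype.card ι := by
        simp only [Finset.sum_const, Finset.card_univ, nsmul_eq_mul, mul_one]
        rw [← sq, Real.sqrt_sq (Nat.cast_nonneg _)]

lemma trace_mul_eq_frobInner_of_isSymm (B : Matrix ι ι ℝ) {X : Matrix ι ι ℝ} (hX : X.IsSymm) :
    Matrix.trace (B * X) = frobInner B X := by
  simp only [Matrix.trace, Matrix.diag, Matrix.mul_apply, frobInner]
  refine Finset.sum_congr rfl fun i _ => Finset.sum_congr rfl fun j _ => ?_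
  rw [hX.apply i j]

end CPdelta

lemma norm_apply_le_sSup_unitClosedBall_mul {E F : Type*} [NormedAddCommGroup E] [NormedSpace ℝ E]
    [FiniteDimensional ℝ E] [NormedAddCommGroup F] [NormedSpace ℝ F] (A : E →ₗ[ℝ] F) (x : E) :
    ‖A x‖ ≤ sSup {r : ℝ | ∃ y : E, ‖y‖ ≤ 1 ∧ r = ‖A y‖} * ‖x‖ := by
  have hsup :
      sSup {r : ℝ | ∃ y : E, ‖y‖ ≤ 1 ∧ r = ‖A y‖} = ‖LinearMap.toContinuousLinearMap A‖ := by
    rw [← ContinuousLinearMap.sSup_unitClosedBall_eq_norm]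
    congr 1
    ext r
    simp [eq_comm]
  rw [hsup]
  exact (LinearMap.toContinuousLinearMap A).le_opNorm x

section FrobeniusNorm

attribute [local instance] Matrix.frobeniusNormedAddCommGroup Matrix.frobeniusNormedSpace

lemma frobNorm_eq_norm {ι : Type*} [Fintype ι] (X : Matrix ι ι ℝ) : frobNorm X = ‖X‖ := by
  simp [frobNorm, Matrix.frobenius_norm_def, Real.sqrt_eq_rpow]

lemma norm_apply_le_opNorm_mul_frobNorm {p d : ℕ}
    (A : Matrix (Fin p) (Fin p) ℝ →ₗ[ℝ] EuclideanSpace ℝ (Fin d)) (X : Matrix (Fin p) (Fin p) ℝ) :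
    ‖A X‖ ≤ opNorm A * frobNorm X := by
  simp only [opNorm, frobNorm_eq_norm]
  exact norm_apply_le_sSup_unitClosedBall_mul A X

end FrobeniusNorm

lemma opNorm_nonneg {p d : ℕ} (A : Matrix (Fin p) (Fin p) ℝ →ₗ[ℝ] EuclideanSpace ℝ (Fin d)) :
    0 ≤ opNorm A :=
  Real.sSup_nonneg fun _ ⟨_, _, hr⟩ => hr ▸ norm_nonneg _

lemma norm_sub_sq_le_of_mem_CPdelta {p d : ℕ}
    (A : Matrix (Fin p) (Fin p) ℝ →ₗ[ℝ] EuclideanSpace ℝ (Fin d)) {X Y : Matrix (Fin p) (Fin p) ℝ}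
    (hX : X ∈ CPdelta (Fin p)) (hY : Y ∈ CPdelta (Fin p)) :
    ‖A X - A Y‖ ^ 2 ≤ (p : ℝ) ^ 2 * opNorm A ^ 2 := by
  rw [← mul_pow, ← map_sub]
  refine pow_le_pow_left₀ (norm_nonneg _) ?_ 2
  calc ‖A (X - Y)‖ ≤ opNorm A * frobNorm (X - Y) := norm_apply_le_opNorm_mul_frobNorm A _
    _ ≤ opNorm A * p := by
        simpa using mul_le_mul_of_nonneg_left (frobNorm_sub_le_of_mem_CPdelta hX hY)
          (opNorm_nonneg A)
    _ = p * opNorm A := mul_comm _ _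

lemma EuclideanSpace.sum_mul_eq_inner {ι : Type*} [Fintype ι] (x y : EuclideanSpace ℝ ι) :
    ∑ i, x i * y i = ⟪x, y⟫ := by
  simp [PiLp.inner_apply, mul_comm]

lemma trace_linearization_mul {p d : ℕ} {C : Matrix (Fin p) (Fin p) ℝ}
    {A : Matrix (Fin p) (Fin p) ℝ →ₗ[ℝ] EuclideanSpace ℝ (Fin d)}
    {Aadj : EuclideanSpace ℝ (Fin d) →ₗ[ℝ] Matrix (Fin p) (Fin p) ℝ}
    (hadj : ∀ (X : Matrix (Fin p) (Fin p) ℝ) (z : EuclideanSpace ℝ (Fin d)),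
      (∑ i, A X i * z i) = frobInner (Aadj z) X)
    (z r : EuclideanSpace ℝ (Fin d)) (b : ℝ) {X : Matrix (Fin p) (Fin p) ℝ} (hX : X.IsSymm) :
    Matrix.trace ((C + Aadj z + b • Aadj r) * X) =
      Matrix.trace (C * X) + ⟪z, A X⟫ + b * ⟪r, A X⟫ := by
  have hadj' : ∀ w, Matrix.trace (Aadj w * X) = ⟪w, A X⟫ := fun w => by
    rw [trace_mul_eq_frobInner_of_isSymm _ hX, ← hadj, EuclideanSpace.sum_mul_eq_inner,
      real_inner_comm]
  rw [Matrix.add_mul, Matrix.add_mul, Matrix.smul_mul, Matrix.trace_add, Matrix.trace_add,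
    Matrix.trace_smul, hadj', hadj', smul_eq_mul]

lemma penalty_schedule_le {β₀ : ℝ} (hβ₀ : 0 ≤ β₀) {n : ℝ} (hn : 0 ≤ n) :
    (1 - 2 / (n + 1)) * (β₀ * √(n + 1) - β₀ * √n) ≤ 2 / (n + 1) * (β₀ * √(n + 1)) := by
  have hs : 0 < √(n + 1) := Real.sqrt_pos.mpr (by linarith)
  have hsq := Real.sq_sqrt (by linarith : 0 ≤ n + 1)
  have hmono : √n ≤ √(n + 1) := Real.sqrt_le_sqrt (by linarith)
  have hgap : √(n + 1) - √n ≤ 2 / √(n + 1) := by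
    rw [le_div_iff₀ hs]
    nlinarith [Real.mul_self_sqrt hn, Real.sqrt_nonneg n]
  have hη : 2 / (n + 1) * √(n + 1) = 2 / √(n + 1) := by
    field_simp
    exact hsq
  calc (1 - 2 / (n + 1)) * (β₀ * √(n + 1) - β₀ * √n)
      ≤ β₀ * (√(n + 1) - √n) := by
        have : 0 ≤ 2 / (n + 1) * (β₀ * (√(n + 1) - √n)) := by
          have : 0 ≤ √(n + 1) - √n := by linarith
          positivity
        linarith
    _ ≤ β₀ * (2 / √(n + 1)) := mul_le_mul_of_nonneg_left hgap hβ₀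
    _ = 2 / (n + 1) * (β₀ * √(n + 1)) := by rw [← hη]; ring

lemma error_schedule_eq (β₀ M : ℝ) {n : ℝ} (hn : 0 ≤ n) :
    3 / 2 * (β₀ * √(n + 1)) * (2 / (n + 1)) ^ 2 * M = 6 * β₀ * M / ((n + 1) * √(n + 1)) := by
  have hs : 0 < √(n + 1) := Real.sqrt_pos.mpr (by linarith)
  have hsq := Real.sq_sqrt (by linarith : 0 ≤ n + 1)
  field_simp
  rw [hsq]
  ring

lemma infeasibility_bound_eq {p a β₀ D s : ℝ} (ha : 0 ≤ a) (hβ₀ : 0 < β₀) (hs : 0 < s) :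
    4 * D / (β₀ * s) + √(2 * (6 * β₀ * (p ^ 2 * a ^ 2) / s) / (β₀ * s)) =
      1 / s * (2 * √3 * |p| * a + 4 * D / β₀) := by
  have hsqrt : √(2 * (6 * β₀ * (p ^ 2 * a ^ 2) / s) / (β₀ * s)) = 2 * √3 * |p| * a / s := by
    rw [← Real.sqrt_sq (by positivity : 0 ≤ 2 * √3 * |p| * a / s)]
    congr 1
    field_simp
    rw [sq_abs, Real.sq_sqrt (by norm_num)]
    ring
  rw [hsqrt]
  field_simp
  ring

theorem fwal_infeasibility_error_general
    {p d : ℕ}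
    (C : Matrix (Fin p) (Fin p) ℝ)
    (A : Matrix (Fin p) (Fin p) ℝ →ₗ[ℝ] EuclideanSpace ℝ (Fin d))
    (Aadj : EuclideanSpace ℝ (Fin d) →ₗ[ℝ] Matrix (Fin p) (Fin p) ℝ)
    (hadj : ∀ (X : Matrix (Fin p) (Fin p) ℝ) (z : EuclideanSpace ℝ (Fin d)),
      (∑ i, A X i * z i) = frobInner (Aadj z) X)
    (v : EuclideanSpace ℝ (Fin d))
    (β₀ : ℝ) (hβ₀ : 0 < β₀)
    (W : ℕ → Matrix (Fin p) (Fin p) ℝ)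
    (y : ℕ → EuclideanSpace ℝ (Fin d))
    (H : ℕ → Matrix (Fin p) (Fin p) ℝ)
    (γ : ℕ → ℝ)
    (hW1 : W 1 ∈ CPdelta (Fin p))
    -- `H t` is a minimizer over `Δ^p` of `Z ↦ Tr (G_t Z)`, where
    -- `G_t = C + 𝒜ᵀ y_t + β_t 𝒜ᵀ (𝒜 W_t - v)` and `β_t = β₀ √(t+1)`
    (hHmem : ∀ t, 1 ≤ t → H t ∈ CPdelta (Fin p))
    (hHmin : ∀ t, 1 ≤ t → ∀ Z ∈ CPdelta (Fin p),
      Matrix.trace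
        ((C + Aadj (y t) + (β₀ * Real.sqrt ((t : ℝ) + 1)) • Aadj (A (W t) - v)) * H t) ≤
      Matrix.trace
        ((C + Aadj (y t) + (β₀ * Real.sqrt ((t : ℝ) + 1)) • Aadj (A (W t) - v)) * Z))
    -- primal update with step-size `η_t = 2/(t+1)`
    (hWupd : ∀ t, 1 ≤ t →
      W (t + 1) = (1 - 2 / ((t : ℝ) + 1)) • W t + (2 / ((t : ℝ) + 1)) • H t)
    -- dual step-size condition `γ_t ≥ 0`, `γ_t ‖g_t‖² ≤ β_t η_t² p² ‖𝒜‖²`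
    (hγ : ∀ t, 1 ≤ t →
      γ t * ‖A (W (t + 1)) - v‖ ^ 2 ≤
        (β₀ * Real.sqrt ((t : ℝ) + 1)) * (2 / ((t : ℝ) + 1)) ^ 2 * (p : ℝ) ^ 2 * opNorm A ^ 2)
    -- dual update `y_{t+1} = y_t + γ_t g_t` with `g_t = 𝒜 W_{t+1} - v`
    (hyupd : ∀ t, 1 ≤ t → y (t + 1) = y t + γ t • (A (W (t + 1)) - v))
    (Wstar : Matrix (Fin p) (Fin p) ℝ)
    (hWstar : Wstar ∈ CPdelta (Fin p)) (hfeas : A Wstar = v)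
    -- strong duality: a dual optimal `y⋆`
    (ystar : EuclideanSpace ℝ (Fin d))
    (hdual : ∀ Z ∈ CPdelta (Fin p),
      Matrix.trace (C * Wstar) ≤ Matrix.trace (C * Z) + ∑ i, ystar i * (A Z - v) i)
    -- bounded effective dual domain
    (D : ℝ) (hyD : ∀ t, 1 ≤ t → ‖y t‖ ≤ D) (hystarD : ‖ystar‖ ≤ D) :
    ∀ t, 2 ≤ t →
      ‖A (W t) - v‖ ≤
        (1 / Real.sqrt (t : ℝ)) *
          (2 * Real.sqrt 3 * (p : ℝ) * opNorm A + 4 * D / β₀) := by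
  set f := (Matrix.traceLinearMap (Fin p) ℝ ℝ).comp (LinearMap.mulLeft ℝ C)
  have hWmem : ∀ n, 1 ≤ n → W n ∈ CPdelta (Fin p) :=
    (convex_convexHull ℝ _).mem_of_iterate_convex_combination (η := fun n => 2 / ((n : ℝ) + 1))
      (fun n hn => ⟨by positivity, by
        rw [div_le_one (by positivity)]; exact_mod_cast Nat.succ_le_succ hn⟩) hW1 hHmem hWupd
  have hrec : ∀ n : ℕ, 1 ≤ n →
      augLagrangian f A v (β₀ * √((n + 1 : ℕ) : ℝ)) (W (n + 1)) (y (n + 1)) - f Wstar ≤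
        (1 - 2 / ((n : ℝ) + 1)) * (augLagrangian f A v (β₀ * √(n : ℝ)) (W n) (y n) - f Wstar)
          + 6 * β₀ * ((p : ℝ) ^ 2 * opNorm A ^ 2) / (((n : ℝ) + 1) * √((n : ℝ) + 1)) := by
    intro n hn
    have hH := hHmin n hn Wstar hWstar
    rw [trace_linearization_mul hadj _ _ _ (isSymm_of_mem_CPdelta (hHmem n hn)),
      trace_linearization_mul hadj _ _ _ (isSymm_of_mem_CPdelta hWstar)] at hH
    have hstep := augLagrangian_step_le (f := f) (by positivity) (by positivity) hfeas hH
      (norm_sub_sq_le_of_mem_CPdelta A (hHmem n hn) (hWmem n hn))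
      (penalty_schedule_le hβ₀.le n.cast_nonneg)
      (by rw [← hWupd n hn, ← mul_assoc]; exact hγ n hn)
    rw [← hWupd n hn, ← hyupd n hn, error_schedule_eq _ _ n.cast_nonneg] at hstep
    push_cast
    exact hstep
  intro t ht
  have hs : 0 < √(t : ℝ) := Real.sqrt_pos.mpr (Nat.cast_pos.mpr (by omega))
  have hgap := le_div_sqrt_of_recursion
    (e := fun n => augLagrangian f A v (β₀ * √(n : ℝ)) (W n) (y n) - f Wstar)
    (by positivity) hrec t ht
  calc ‖A (W t) - v‖
      ≤ 4 * D / (β₀ * √t) + √(2 * (6 * β₀ * ((p : ℝ) ^ 2 * opNorm A ^ 2) / √t) / (β₀ * √t)) :=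
        norm_residual_le_of_augLagrangian_sub_le (mul_pos hβ₀ hs) (by positivity)
          (by rw [← EuclideanSpace.sum_mul_eq_inner]; exact hdual _ (hWmem t (by omega)))
          (hyD t (by omega)) hystarD hgap
    _ = _ := by rw [infeasibility_bound_eq (opNorm_nonneg A) hβ₀ hs, Nat.abs_cast]

/-- FWAL infeasibility error, Proposition 1 of Q-FW.
Under the FWAL iteration with `β_t = β₀√(t+1)`, `η_t = 2/(t+1)`, assuming a feasible
minimizer `W⋆`, strong duality, and bounded dual iterates, the infeasibility decays
as `O(1/√t)`. -/
theorem fwal_infeasibility_error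
    {p d : ℕ} (hp : 0 < p)
    (C : Matrix (Fin p) (Fin p) ℝ) (hC : C.IsSymm)
    (A : Matrix (Fin p) (Fin p) ℝ →ₗ[ℝ] EuclideanSpace ℝ (Fin d))
    (Aadj : EuclideanSpace ℝ (Fin d) →ₗ[ℝ] Matrix (Fin p) (Fin p) ℝ)
    (hadj : ∀ (X : Matrix (Fin p) (Fin p) ℝ) (z : EuclideanSpace ℝ (Fin d)),
      (∑ i, A X i * z i) = frobInner (Aadj z) X)
    (v : EuclideanSpace ℝ (Fin d))
    (β₀ : ℝ) (hβ₀ : 0 < β₀)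
    (W : ℕ → Matrix (Fin p) (Fin p) ℝ)
    (y : ℕ → EuclideanSpace ℝ (Fin d))
    (H : ℕ → Matrix (Fin p) (Fin p) ℝ)
    (γ : ℕ → ℝ)
    (hW1 : W 1 ∈ CPdelta (Fin p))
    -- `H t` is a minimizer over `Δ^p` of `Z ↦ Tr (G_t Z)`, where
    -- `G_t = C + 𝒜ᵀ y_t + β_t 𝒜ᵀ (𝒜 W_t - v)` and `β_t = β₀ √(t+1)`
    (hHmem : ∀ t, 1 ≤ t → H t ∈ CPdelta (Fin p))
    (hHmin : ∀ t, 1 ≤ t → ∀ Z ∈ CPdelta (Fin p),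
      Matrix.trace
        ((C + Aadj (y t) + (β₀ * Real.sqrt ((t : ℝ) + 1)) • Aadj (A (W t) - v)) * H t) ≤
      Matrix.trace
        ((C + Aadj (y t) + (β₀ * Real.sqrt ((t : ℝ) + 1)) • Aadj (A (W t) - v)) * Z))
    -- primal update with step-size `η_t = 2/(t+1)`
    (hWupd : ∀ t, 1 ≤ t →
      W (t + 1) = (1 - 2 / ((t : ℝ) + 1)) • W t + (2 / ((t : ℝ) + 1)) • H t)
    -- dual step-size condition `γ_t ≥ 0`, `γ_t ‖g_t‖² ≤ β_t η_t² p² ‖𝒜‖²`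
    (hγ0 : ∀ t, 1 ≤ t → 0 ≤ γ t)
    (hγ : ∀ t, 1 ≤ t →
      γ t * ‖A (W (t + 1)) - v‖ ^ 2 ≤
        (β₀ * Real.sqrt ((t : ℝ) + 1)) * (2 / ((t : ℝ) + 1)) ^ 2 * (p : ℝ) ^ 2 * opNorm A ^ 2)
    -- dual update `y_{t+1} = y_t + γ_t g_t` with `g_t = 𝒜 W_{t+1} - v`
    (hyupd : ∀ t, 1 ≤ t → y (t + 1) = y t + γ t • (A (W (t + 1)) - v))
    (Wstar : Matrix (Fin p) (Fin p) ℝ)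
    (hWstar : Wstar ∈ CPdelta (Fin p)) (hfeas : A Wstar = v)
    -- `W⋆` minimizes `Tr(C W)` over the feasible set
    (hmin : ∀ Z ∈ CPdelta (Fin p), A Z = v →
      Matrix.trace (C * Wstar) ≤ Matrix.trace (C * Z))
    -- strong duality: a dual optimal `y⋆`
    (ystar : EuclideanSpace ℝ (Fin d))
    (hdual : ∀ Z ∈ CPdelta (Fin p),
      Matrix.trace (C * Wstar) ≤ Matrix.trace (C * Z) + ∑ i, ystar i * (A Z - v) i)
    -- bounded effective dual domain
    (D : ℝ) (hyD : ∀ t, 1 ≤ t → ‖y t‖ ≤ D) (hystarD : ‖ystar‖ ≤ D) :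
    ∀ t, 2 ≤ t →
      ‖A (W t) - v‖ ≤
        (1 / Real.sqrt (t : ℝ)) *
          (2 * Real.sqrt 3 * (p : ℝ) * opNorm A + 4 * D / β₀) :=
  fwal_infeasibility_error_general C A Aadj hadj v β₀ hβ₀ W y H γ hW1 hHmem hHmin hWupd hγ hyupd
    Wstar hWstar hfeas ystar hdual D hyD hystarD
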